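/- For real x and y with y > 0 and −y < x < y, x R_C(y², y² − x²) = artanh(x/y). -/

import Mathlib

open MeasureTheory Real

noncomputable def RC (x y : ℝ) : ℝ :=
  (1/2) * ∫ t in Set.Ioi (0:ℝ), (Real.sqrt (t + x))⁻¹ * (t + y)⁻¹

noncomputable def RF (x y z : ℝ) : ℝ :=
  (1/2) * ∫ t in Set.Ioi (0:ℝ), (Real.sqrt ((t + x) * (t + y) * (t + z)))⁻¹

noncomputable def RD (x y z : ℝ) : ℝ :=
  (3/2) * ∫ t in Set.Ioi (0:ℝ),
    (Real.sqrt ((t + x) * (t + y)))⁻¹ * ((t + z) * Real.sqrt (t + z))⁻¹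

noncomputable def RJ (x y z p : ℝ) : ℝ :=
  (3/2) * ∫ t in Set.Ioi (0:ℝ),
    (Real.sqrt ((t + x) * (t + y) * (t + z)))⁻¹ * (t + p)⁻¹

noncomputable def RG (x y z : ℝ) : ℝ :=
  (1/4) * ∫ t in Set.Ioi (0:ℝ),
    (Real.sqrt ((t + x) * (t + y) * (t + z)))⁻¹ *
      (x / (t + x) + y / (t + y) + z / (t + z)) * t

/-!
For `x ^ 2 < c`, the function `t ↦ log ((√(t + c) - x) / (√(t + c) + x))` is an antiderivative of
`x / (√(t + c) (t + c - x ^ 2))` on `[0, ∞)` and tends to `0` at infinity. The integrand has the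
constant sign of `x`, so the improper integral over `(0, ∞)` is given by the fundamental theorem of
calculus, and `x R_C(c, c - x ^ 2) = ½ log ((√c + x) / (√c - x))`. With `c = y ^ 2` this is
`artanh (x / y)`.
-/

open Filter Set Topology

lemma hasDerivAt_log_sqrt_sub_div_sqrt_add {c x t : ℝ} (h : x ^ 2 < t + c) :
    HasDerivAt (fun t => log ((√(t + c) - x) / (√(t + c) + x)))
      (x * ((√(t + c))⁻¹ * (t + (c - x ^ 2))⁻¹)) t := by
  have hpos : 0 < t + c := (sq_nonneg x).trans_lt h
  have hsx : x < √(t + c) := Real.lt_sqrt_of_sq_lt h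
  have hxs : -x < √(t + c) := Real.lt_sqrt_of_sq_lt (by rwa [neg_sq])
  have hsqrt : HasDerivAt (fun t => √(t + c)) (1 / (2 * √(t + c))) t := by
    simpa using ((hasDerivAt_id t).add_const c).sqrt hpos.ne'
  refine (((hsqrt.sub_const x).div (hsqrt.add_const x) (by linarith)).log
    (div_pos (by linarith) (by linarith)).ne').congr_deriv ?_
  have hfactor : t + (c - x ^ 2) = (√(t + c) - x) * (√(t + c) + x) := by
    ring_nf
    rw [Real.sq_sqrt hpos.le]
    ring
  have : √(t + c) - x ≠ 0 := by linarith
  have : √(t + c) + x ≠ 0 := by linarith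
  have : √(t + c) ≠ 0 := by linarith
  simp only [Pi.div_apply]
  rw [hfactor]
  field_simp
  ring

lemma tendsto_log_sqrt_sub_div_sqrt_add_atTop (c x : ℝ) :
    Tendsto (fun t => log ((√(t + c) - x) / (√(t + c) + x))) atTop (𝓝 0) := by
  have hsqrt : Tendsto (fun t => √(t + c)) atTop atTop :=
    Real.tendsto_sqrt_atTop.comp (tendsto_atTop_add_const_right _ c tendsto_id)
  have hratio : Tendsto (fun s : ℝ => (s - x) / (s + x)) atTop (𝓝 1) := by
    have hlim : Tendsto (fun s : ℝ => 1 - 2 * x / (s + x)) atTop (𝓝 (1 - 0)) :=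
      tendsto_const_nhds.sub <| tendsto_const_nhds.div_atTop <|
        tendsto_atTop_add_const_right _ x tendsto_id
    rw [sub_zero] at hlim
    refine hlim.congr' ?_
    filter_upwards [eventually_gt_atTop (-x)] with s hs
    have : s + x ≠ 0 := by linarith
    field_simp
    ring
  simpa [Function.comp_def] using
    (Real.continuousAt_log one_ne_zero).tendsto.comp (hratio.comp hsqrt)

lemma integral_Ioi_mul_inv_sqrt_mul_inv {c x : ℝ} (h : x ^ 2 < c) :
    ∫ t in Ioi (0 : ℝ), x * ((√(t + c))⁻¹ * (t + (c - x ^ 2))⁻¹)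
      = log ((√c + x) / (√c - x)) := by
  have hderiv : ∀ t ∈ Ici (0 : ℝ), HasDerivAt (fun t => log ((√(t + c) - x) / (√(t + c) + x)))
      (x * ((√(t + c))⁻¹ * (t + (c - x ^ 2))⁻¹)) t :=
    fun t ht => hasDerivAt_log_sqrt_sub_div_sqrt_add (by linarith [mem_Ici.mp ht])
  have hkernel : ∀ t ∈ Ioi (0 : ℝ), 0 ≤ (√(t + c))⁻¹ * (t + (c - x ^ 2))⁻¹ := fun t ht => by
    have : 0 < t + (c - x ^ 2) := by linarith [mem_Ioi.mp ht]
    positivity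
  have hlim := tendsto_log_sqrt_sub_div_sqrt_add_atTop c x
  rcases le_total 0 x with hx | hx
  · rw [integral_Ioi_of_hasDerivAt_of_nonneg' hderiv
      (fun t ht => mul_nonneg hx (hkernel t ht)) hlim]
    simp [← Real.log_inv]
  · rw [integral_Ioi_of_hasDerivAt_of_nonpos' hderiv
      (fun t ht => mul_nonpos_of_nonpos_of_nonneg hx (hkernel t ht)) hlim]
    simp [← Real.log_inv]

theorem mul_RC_sub_sq {c x : ℝ} (h : x ^ 2 < c) :
    x * RC c (c - x ^ 2) = (1 / 2) * log ((√c + x) / (√c - x)) := by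
  rw [RC, ← integral_Ioi_mul_inv_sqrt_mul_inv h, integral_const_mul]
  ring

theorem stmt4 (x y : ℝ) (hy : 0 < y) (h1 : -y < x) (h2 : x < y) :
    x * RC (y ^ 2) (y ^ 2 - x ^ 2) = (1/2) * Real.log ((1 + x / y) / (1 - x / y)) := by
  rw [mul_RC_sub_sq (sq_lt_sq' h1 h2), Real.sqrt_sq hy.le]
  congr 2
  field_simp
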